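/- Let u : Fin n → Fin n → R be a matrix over a commutative ring R and for each column m and each i ∈ Fin n define the 2×2 matrix A_{i,1}^{[m]} = [[0,0],[u(i,m),0]] and A_{i,0}^{[m]} = identity. Define 𝒜^{[m]} = Σ over bit strings σ ∈ {0,1}^n with exactly one 1 of A_{1,σ_1}^{[m]} ⊗ ⋯ ⊗ A_{n,σ_n}^{[m]}, a 2^n × 2^n matrix. Then the entry of the product 𝒜^{[1]} · 𝒜^{[2]} · ⋯ · 𝒜^{[n]} in position (bottom-left), i.e. at row index (1,1,...,1) and column index (0,0,...,0) in bit-string indexing, equals the permanent of the matrix (u(i,m))_{i,m}. -/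

import Mathlib

/-!
Each `opA u m` switches off a single bit `i` of the row index, from `1` to `0`, with weight
`u i m`. So the entry of `opA u (c 0) * ⋯ * opA u (c (k-1))` at row `p` and the all-zero column
adds up, over the orders `f` in which the ones of `p` can be switched off one by one, the weights
`∏ j, u (f j) (c j)`. Starting from the all-ones row, these orders are the permutations of `Fin n`.
-/

/-- Kronecker product of `n` 2×2 matrices, indexed by bit strings of length `n`. -/
def kron {n : ℕ} {R : Type*} [CommRing R] (M : Fin n → Matrix (Fin 2) (Fin 2) R) :
    Matrix (Fin n → Fin 2) (Fin n → Fin 2) R :=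
  Matrix.of fun p q => ∏ k, M k (p k) (q k)

/-- The operator-basis tensor `𝒜^[m]`: sum over bit strings with exactly one `1` of the
Kronecker product placing the nilpotent block with entry `u i m` in factor `i`. -/
def opA {n : ℕ} {R : Type*} [CommRing R] (u : Fin n → Fin n → R) (m : Fin n) :
    Matrix (Fin n → Fin 2) (Fin n → Fin 2) R :=
  ∑ σ ∈ Finset.univ.filter
      (fun σ : Fin n → Fin 2 => (Finset.univ.filter (fun k => σ k = 1)).card = 1),
    kron (fun k => if σ k = 1 then (!![0, 0; u k m, 0] : Matrix (Fin 2) (Fin 2) R) else 1)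

open Function Finset

theorem Fin.cons_injective_and_range_eq_iff {α : Type*} {k : ℕ} {s : Set α} {i : α}
    {g : Fin k → α} :
    (Injective (Fin.cons i g : Fin (k + 1) → α) ∧ Set.range (Fin.cons i g) = s) ↔
      i ∈ s ∧ Injective g ∧ Set.range g = s \ {i} := by
  rw [Fin.cons_injective_iff, Fin.range_cons]
  constructor
  · rintro ⟨⟨hi, hg⟩, rfl⟩
    exact ⟨Set.mem_insert _ _, hg, (Set.insert_sdiff_self_of_notMem hi).symm⟩
  · rintro ⟨hi, hg, hrange⟩
    refine ⟨⟨?_, hg⟩, ?_⟩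
    · simp [hrange]
    · rw [hrange, Set.insert_sdiff_self_of_mem hi]

theorem Fintype.sum_ite_bijective_eq_sum_perm {α M : Type*} [Fintype α] [DecidableEq α]
    [AddCommMonoid M] [DecidablePred (Bijective : (α → α) → Prop)] (F : (α → α) → M) :
    ∑ f, (if Bijective f then F f else 0) = ∑ σ : Equiv.Perm α, F σ := by
  rw [← Finset.sum_filter, Finset.sum_subtype (p := Bijective) _ fun f => by simp]
  exact Fintype.sum_equiv Equiv.bijectiveEquiv _ _ fun _ => rfl

theorem Fin.sum_univ_pi_succ {α M : Type*} [Fintype α] [AddCommMonoid M] {k : ℕ}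
    (F : (Fin (k + 1) → α) → M) : ∑ f, F f = ∑ a, ∑ g : Fin k → α, F (Fin.cons a g) := by
  rw [← (Fin.consEquiv fun _ => α).sum_comp, Fintype.sum_prod_type]
  rfl


section

variable {n : ℕ} {R : Type*} [CommRing R]

theorem kron_update_one_apply (i : Fin n) (A : Matrix (Fin 2) (Fin 2) R)
    (p q : Fin n → Fin 2) :
    kron (update 1 i A) p q = if ∀ k ≠ i, p k = q k then A (p i) (q i) else 0 := by
  rw [kron, Matrix.of_apply, Fintype.prod_eq_mul_prod_compl i, update_self,
    Finset.prod_congr rfl fun k hk => by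
      rw [update_of_ne (by simpa using hk), Pi.one_apply, Matrix.one_apply],
    Finset.prod_boole]
  simp [mul_ite]

theorem kron_update_one_mul_apply (i : Fin n) (A : Matrix (Fin 2) (Fin 2) R)
    (B : Matrix (Fin n → Fin 2) (Fin n → Fin 2) R) (p q : Fin n → Fin 2) :
    (kron (update 1 i A) * B) p q = ∑ b, A (p i) b * B (update p i b) q := by
  have hsupport : ∀ r, (∀ k ≠ i, p k = r k) ↔ r ∈ univ.image (update p i) := by
    intro r
    simp only [mem_image, mem_univ, true_and]
    constructor
    · exact fun h => ⟨r i, (eq_update_iff.2 ⟨rfl, fun k hk => (h k hk).symm⟩).symm⟩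
    · rintro ⟨b, rfl⟩ k hk
      rw [update_of_ne hk]
  calc (kron (update 1 i A) * B) p q
      = ∑ r, if r ∈ univ.image (update p i) then A (p i) (r i) * B r q else 0 := by
        simp only [Matrix.mul_apply, kron_update_one_apply, ite_mul, zero_mul, hsupport]
    _ = ∑ r ∈ univ.image (update p i), A (p i) (r i) * B r q := Fintype.sum_ite_mem _ _
    _ = ∑ b, A (p i) b * B (update p i b) q := by
        rw [Finset.sum_image fun a _ b _ h => update_injective p i h]
        simp

theorem opA_eq_sum_kron (u : Fin n → Fin n → R) (m : Fin n) :
    opA u m = ∑ i, kron (update 1 i !![0, 0; u i m, 0]) := by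
  have hone_bit : univ.filter (fun σ : Fin n → Fin 2 => #(univ.filter (σ · = 1)) = 1) =
      univ.image (fun i => Pi.single i 1) := by
    ext σ
    simp only [mem_filter, mem_univ, true_and, mem_image, card_eq_one]
    refine exists_congr fun i => ?_
    rw [Finset.ext_iff, funext_iff]
    refine forall_congr' fun k => ?_
    by_cases hk : k = i
    · subst hk; simp [eq_comm]
    · simp [hk]; omega
  rw [opA, hone_bit, Finset.sum_image fun i _ j _ h => by simpa [Pi.single_apply] using congrFun h i]
  refine Finset.sum_congr rfl fun i _ => congrArg kron (funext fun k => ?_)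
  by_cases hk : k = i
  · subst hk; simp
  · simp [hk]

theorem opA_mul_apply (u : Fin n → Fin n → R) (m : Fin n)
    (B : Matrix (Fin n → Fin 2) (Fin n → Fin 2) R) (p q : Fin n → Fin 2) :
    (opA u m * B) p q = ∑ i, if p i = 1 then u i m * B (update p i 0) q else 0 := by
  simp only [opA_eq_sum_kron, Matrix.sum_mul, Matrix.sum_apply, kron_update_one_mul_apply]
  refine Finset.sum_congr rfl fun i _ => ?_
  obtain h | h : p i = 0 ∨ p i = 1 := by omega
  all_goals simp [h, Fin.sum_univ_two]

open scoped Classical in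
theorem ofFn_opA_prod_apply_zero (u : Fin n → Fin n → R) {k : ℕ} (c : Fin k → Fin n)
    (p : Fin n → Fin 2) :
    (List.ofFn fun j => opA u (c j)).prod p (fun _ => 0) =
      ∑ f : Fin k → Fin n,
        if Injective f ∧ Set.range f = {a | p a = 1} then ∏ j, u (f j) (c j) else 0 := by
  induction k generalizing p with
  | zero =>
    have hp : (p = fun _ => 0) ↔ {a | p a = 1} = ∅ := by
      simp only [funext_iff, Set.eq_empty_iff_forall_notMem, Set.mem_ofPred_eq]
      exact forall_congr' fun a => by omega
    simp only [List.ofFn_zero, List.prod_nil, Matrix.one_apply, Fintype.sum_unique,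
      Set.range_eq_empty, injective_of_subsingleton, true_and, Finset.univ_eq_empty,
      Finset.prod_empty, hp, eq_comm (a := ∅)]
  | succ k ih =>
    have hupdate : ∀ i, {a | update p i 0 a = 1} = {a | p a = 1} \ {i} := by
      intro i
      ext a
      by_cases ha : a = i <;> simp [ha]
    rw [List.ofFn_succ, List.prod_cons, opA_mul_apply, Fin.sum_univ_pi_succ]
    refine Finset.sum_congr rfl fun i _ => ?_
    simp only [ih, hupdate, Fin.cons_injective_and_range_eq_iff,
      Fin.prod_univ_succ, Fin.cons_zero, Fin.cons_succ, Set.mem_ofPred_eq]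
    split_ifs with hi
    · simp [Finset.mul_sum, hi]
    · simp [hi]

end

theorem opA_prod_entry_eq_permanent (n : ℕ) (R : Type*) [CommRing R]
    (u : Fin n → Fin n → R) :
    ((List.ofFn (fun m : Fin n => opA u m)).prod) (fun _ => 1) (fun _ => 0) =
      ∑ σ : Equiv.Perm (Fin n), ∏ i, u i (σ i) := by
  calc ((List.ofFn (fun m : Fin n => opA u m)).prod) (fun _ => 1) (fun _ => 0)
      = ∑ f : Fin n → Fin n, if Bijective f then ∏ j, u (f j) j else 0 := by
        rw [ofFn_opA_prod_apply_zero u (fun m => m)]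
        refine Finset.sum_congr rfl fun f _ => if_congr ?_ rfl rfl
        simp [Bijective, Set.range_eq_univ]
    _ = ∑ σ : Equiv.Perm (Fin n), ∏ j, u (σ j) j := Fintype.sum_ite_bijective_eq_sum_perm _
    _ = (Matrix.of u).permanent := rfl
    _ = ∑ σ : Equiv.Perm (Fin n), ∏ i, u i (σ i) := (Matrix.permanent_transpose _).symm
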